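/- Let G₁ = (V₁, E₁) and G₂ = (V₂, E₂) be finite simple graphs and let ψ : X(G₁) → X(G₂) be an isomorphism of k-algebras. Then there is a graph isomorphism σ : G₁ → G₂ such that ψ(b_v) = b_{σ(v)} for every v ∈ V₁ and ψ(b_{{v,w}}) = b_{{σ(v),σ(w)}} for every edge {v,w} ∈ E₁; in particular ψ = X(σ). -/

import Mathlib

open scoped BigOperators

variable (k : Type*) [Field k]

section Defs

variable {V : Type*} [Fintype V] [DecidableEq V]

/-- The square `b i * b i` of the `i`-th natural basis vector of the evolution algebra
`X(G)` attached to a simple graph `G`: for a vertex `v`, `b_v * b_v = b_v`; for an edge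
`e = {v, w}`, `b_e * b_e = b_e + b_v + b_w`. -/
noncomputable def graphSq (G : SimpleGraph V) [DecidableRel G.Adj] :
    (V ⊕ ↥G.edgeSet) → (V ⊕ ↥G.edgeSet) → k
  | Sum.inl v => Pi.single (Sum.inl v) 1
  | Sum.inr e => Pi.single (Sum.inr e) 1 +
      ∑ v ∈ Finset.univ.filter (· ∈ (e : Sym2 V)), Pi.single (Sum.inl v) 1

/-- The multiplication of the evolution algebra `X(G)` attached to a simple graph `G`,
as a `k`-bilinear map on the space of functions `(V ⊕ G.edgeSet) → k`.  Distinct natural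
basis vectors multiply to zero, and the squares are given by `graphSq`. -/
noncomputable def graphMul (G : SimpleGraph V) [DecidableRel G.Adj] :
    ((V ⊕ ↥G.edgeSet) → k) →ₗ[k] ((V ⊕ ↥G.edgeSet) → k) →ₗ[k] ((V ⊕ ↥G.edgeSet) → k) :=
  LinearMap.mk₂ k (fun x y => ∑ i, (x i * y i) • graphSq k G i)
    (by intro x x' y; simp [add_mul, add_smul, Finset.sum_add_distrib])
    (by intro c x y; simp [Finset.smul_sum, smul_smul, mul_assoc])
    (by intro x y y'; simp [mul_add, add_smul, Finset.sum_add_distrib])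
    (by intro c x y; simp [Finset.smul_sum, smul_smul, mul_assoc, mul_left_comm])

end Defs

section Morphisms

variable {V₁ V₂ : Type*} [Fintype V₁] [DecidableEq V₁] [Fintype V₂] [DecidableEq V₂]

/-- The map induced on natural-basis index sets by a graph morphism `f : G₁ → G₂`:
a vertex `v` is sent to `f v` and an edge `{v, w}` to `{f v, f w}`. -/
def graphIdxMap (G₁ : SimpleGraph V₁) (G₂ : SimpleGraph V₂) (f : V₁ → V₂)
    (hf : ∀ ⦃v w : V₁⦄, G₁.Adj v w → G₂.Adj (f v) (f w)) :
    V₁ ⊕ ↥G₁.edgeSet → V₂ ⊕ ↥G₂.edgeSet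
  | Sum.inl v => Sum.inl (f v)
  | Sum.inr e => Sum.inr ⟨Sym2.map f (e : Sym2 V₁), by
      obtain ⟨s, hs⟩ := e
      induction s using Sym2.ind with
      | _ v w => simpa using hf (by simpa using hs)⟩

/-- The `k`-linear map `X(f) : X(G₁) → X(G₂)` induced by a graph morphism `f`, sending
each natural basis vector of `X(G₁)` to the corresponding natural basis vector of
`X(G₂)`. -/
noncomputable def graphXmap (G₁ : SimpleGraph V₁) (G₂ : SimpleGraph V₂)
    [DecidableRel G₁.Adj] [DecidableRel G₂.Adj] (f : V₁ → V₂)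
    (hf : ∀ ⦃v w : V₁⦄, G₁.Adj v w → G₂.Adj (f v) (f w)) :
    ((V₁ ⊕ ↥G₁.edgeSet) → k) →ₗ[k] ((V₂ ⊕ ↥G₂.edgeSet) → k) :=
  (Pi.basisFun k (V₁ ⊕ ↥G₁.edgeSet)).constr k fun i =>
    Pi.single (graphIdxMap G₁ G₂ f hf i) 1

end Morphisms

/-! Distinct natural basis vectors of `X(G)` multiply to zero and the squares `b_i * b_i` are
linearly independent (their matrix is unitriangular), so `x * y = 0` exactly when `x` and `y`
have disjoint supports. Hence `ψ` sends the natural basis of `X(G₁)` to pairwise disjointly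
supported vectors, and since the dimensions agree, `ψ b_i = c_i b_{π i}` for a bijection `π`.
The `b_{π i}`-coefficient of `ψ (b_i * b_i) = c_i² (b_{π i} * b_{π i})` gives `c_i = c_i²`, so
`c_i = 1` and `π` preserves the structure matrix. That matrix recognises the vertices (the `b_i`
with `b_i * b_i = b_i`) and the incidences between vertices and edges, so `π` comes from a graph
isomorphism. -/

section EvolutionAlgebra

variable {k} {ι κ : Type*} [Fintype ι]

def evolutionMul (A : ι → ι → k) (x y : ι → k) : ι → k :=
  ∑ i, (x i * y i) • A i

theorem evolutionMul_eq_zero_iff {A : ι → ι → k} (hA : LinearIndependent k A) (x y : ι → k) :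
    evolutionMul A x y = 0 ↔ ∀ i, x i * y i = 0 :=
  ⟨fun h => Fintype.linearIndependent_iff.mp hA _ h, fun h => by simp [evolutionMul, h]⟩

variable [DecidableEq ι] [DecidableEq κ]

theorem evolutionMul_single_single_of_ne (A : ι → ι → k) {i j : ι} (hij : i ≠ j) (a b : k) :
    evolutionMul A (Pi.single i a) (Pi.single j b) = 0 :=
  Finset.sum_eq_zero fun n _ => by
    rcases eq_or_ne n i with rfl | hn
    · simp [hij]
    · simp [hn]

theorem evolutionMul_single_self (A : ι → ι → k) (i : ι) (a b : k) :
    evolutionMul A (Pi.single i a) (Pi.single i b) = (a * b) • A i := by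
  rw [evolutionMul, Finset.sum_eq_single i (fun n _ hn => by simp [hn]) (by simp)]
  simp

theorem LinearMap.apply_apply_of_map_single (f : (ι → k) →ₗ[k] (κ → k)) (π : ι ≃ κ) (c : ι → k)
    (hf : ∀ j, f (Pi.single j 1) = Pi.single (π j) (c j)) (y : ι → k) (i : ι) :
    f y (π i) = c i * y i := by
  have hf' : ∀ j a, f (Pi.single j a) = Pi.single (π j) (a * c j) := fun j a => by
    rw [show Pi.single j a = a • Pi.single j (1 : k) by
        rw [← Pi.single_smul', smul_eq_mul, mul_one],
      map_smul, hf, ← Pi.single_smul', smul_eq_mul]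
  conv_lhs => rw [← Finset.univ_sum_single y]
  rw [map_sum, Finset.sum_apply, Finset.sum_eq_single i (fun j _ hj => ?_) (by simp)]
  · simp [hf', mul_comm]
  · simp [hf', π.injective.ne hj]

variable [Fintype κ]

theorem LinearEquiv.exists_equiv_map_single_of_mul_eq_zero (ψ : (ι → k) ≃ₗ[k] (κ → k))
    (h : ∀ i j, i ≠ j → ∀ n, ψ (Pi.single i 1) n * ψ (Pi.single j 1) n = 0) :
    ∃ (π : ι ≃ κ) (c : ι → k), (∀ i, c i ≠ 0) ∧ ∀ i, ψ (Pi.single i 1) = Pi.single (π i) (c i) := by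
  have hsupp : ∀ i, ∃ n, ψ (Pi.single i 1) n ≠ 0 := fun i => by
    by_contra! h0
    simpa using ψ.injective ((funext h0).trans (map_zero ψ).symm)
  choose π hπ using hsupp
  have hinj : π.Injective := fun i j hij => by
    by_contra hne
    exact mul_ne_zero (hπ i) (hij ▸ hπ j) (h i j hne (π i))
  have hcard : Fintype.card ι = Fintype.card κ := by
    simpa using ψ.finrank_eq
  let π' := Equiv.ofBijective π ((Fintype.bijective_iff_injective_and_card π).mpr ⟨hinj, hcard⟩)
  refine ⟨π', fun i => ψ (Pi.single i 1) (π i), hπ, fun i => funext fun n => ?_⟩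
  obtain ⟨j, rfl⟩ := π'.surjective n
  rcases eq_or_ne j i with rfl | hji
  · simp [π']
  · simpa [π', hπ j, hinj.ne hji] using h i j hji.symm (π j)

theorem exists_equiv_map_single_of_map_evolutionMul {A : ι → ι → k} {B : κ → κ → k}
    (hA : ∀ i, A i i = 1) (hB : LinearIndependent k B) (hB' : ∀ n, B n n = 1)
    (ψ : (ι → k) ≃ₗ[k] (κ → k))
    (hψ : ∀ x y, ψ (evolutionMul A x y) = evolutionMul B (ψ x) (ψ y)) :
    ∃ π : ι ≃ κ, (∀ i, ψ (Pi.single i 1) = Pi.single (π i) 1) ∧ ∀ i j, B (π i) (π j) = A i j := by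
  obtain ⟨π, c, hc, hπ⟩ := ψ.exists_equiv_map_single_of_mul_eq_zero fun i j hij n => by
    have h := hψ (Pi.single i 1) (Pi.single j 1)
    rw [evolutionMul_single_single_of_ne A hij, map_zero, eq_comm,
      evolutionMul_eq_zero_iff hB] at h
    exact h n
  have hψA : ∀ i, ψ (A i) = (c i * c i) • B (π i) := fun i => by
    simpa [evolutionMul_single_self, hπ] using hψ (Pi.single i 1) (Pi.single i 1)
  have hψ_apply : ∀ y i, ψ y (π i) = c i * y i :=
    ψ.toLinearMap.apply_apply_of_map_single π c hπ
  -- the `π i`-coordinates are `c i * A i i = c i` and `(c i)² * B (π i) (π i) = (c i)²`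
  have hc_one : ∀ i, c i = 1 := fun i => by
    have h := congrFun (hψA i) (π i)
    rw [hψ_apply, hA, Pi.smul_apply, hB', smul_eq_mul, mul_one, mul_one] at h
    exact (mul_left_cancel₀ (hc i) ((mul_one (c i)).trans h)).symm
  refine ⟨π, fun i => by rw [hπ, hc_one], fun i j => ?_⟩
  simpa [hψ_apply, hc_one] using (congrFun (hψA i) (π j)).symm

end EvolutionAlgebra

section GraphSq

variable {V : Type*} [Fintype V] [DecidableEq V] (G : SimpleGraph V) [DecidableRel G.Adj]

theorem graphMul_apply (x y : V ⊕ G.edgeSet → k) :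
    graphMul k G x y = evolutionMul (graphSq k G) x y := rfl

theorem graphSq_inr_apply_inl (e : G.edgeSet) (v : V) :
    graphSq k G (Sum.inr e) (Sum.inl v) = if v ∈ (e : Sym2 V) then 1 else 0 := by
  simp [graphSq, Finset.sum_apply, Pi.single_apply]

theorem graphSq_inr_apply_inr (e e' : G.edgeSet) :
    graphSq k G (Sum.inr e) (Sum.inr e') = if e' = e then 1 else 0 := by
  simp [graphSq, Finset.sum_apply, Pi.single_apply]

theorem graphSq_apply_self (i : V ⊕ G.edgeSet) : graphSq k G i i = 1 := by
  cases i with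
  | inl v => simp [graphSq]
  | inr e => simp [graphSq_inr_apply_inr]

theorem linearIndependent_graphSq : LinearIndependent k (graphSq k G) := by
  refine Fintype.linearIndependent_iff.mpr fun a ha => ?_
  have h_edge : ∀ e, a (Sum.inr e) = 0 := fun e => by
    simpa [Finset.sum_apply, graphSq, Pi.single_apply] using congrFun ha (Sum.inr e)
  rintro (v | e)
  · simpa [Finset.sum_apply, h_edge, graphSq, Pi.single_apply] using congrFun ha (Sum.inl v)
  · exact h_edge e

theorem graphSq_inr_apply_inl_ne_zero_iff (e : G.edgeSet) (v : V) :
    graphSq k G (Sum.inr e) (Sum.inl v) ≠ 0 ↔ v ∈ (e : Sym2 V) := by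
  simp [graphSq_inr_apply_inl]

theorem forall_graphSq_apply_eq_zero_of_ne_iff (i : V ⊕ G.edgeSet) :
    (∀ j, j ≠ i → graphSq k G i j = 0) ↔ i.isLeft := by
  cases i with
  | inl v => simp +contextual [graphSq]
  | inr e =>
    obtain ⟨v, hv⟩ : ∃ v, v ∈ (e : Sym2 V) := Sym2.ind (fun v _ => ⟨v, Sym2.mem_mk_left _ _⟩) e.1
    simp only [Sum.isLeft_inr, Bool.false_eq_true, iff_false, not_forall]
    exact ⟨Sum.inl v, Sum.inl_ne_inr, (graphSq_inr_apply_inl_ne_zero_iff k G e v).mpr hv⟩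

end GraphSq

section Isomorphism

variable {V₁ V₂ : Type*} [Fintype V₁] [DecidableEq V₁] [Fintype V₂] [DecidableEq V₂]
  {G₁ : SimpleGraph V₁} {G₂ : SimpleGraph V₂} [DecidableRel G₁.Adj] [DecidableRel G₂.Adj]

theorem isLeft_apply_of_graphSq_apply_equiv (π : V₁ ⊕ G₁.edgeSet ≃ V₂ ⊕ G₂.edgeSet)
    (hπ : ∀ i j, graphSq k G₂ (π i) (π j) = graphSq k G₁ i j) (i : V₁ ⊕ G₁.edgeSet) :
    (π i).isLeft = i.isLeft := by
  rw [Bool.eq_iff_iff, ← forall_graphSq_apply_eq_zero_of_ne_iff k, ←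
    forall_graphSq_apply_eq_zero_of_ne_iff k]
  exact (π.forall_congr fun j => by rw [hπ, π.injective.ne_iff]).symm

theorem exists_iso_of_graphSq_apply_equiv (π : V₁ ⊕ G₁.edgeSet ≃ V₂ ⊕ G₂.edgeSet)
    (hπ : ∀ i j, graphSq k G₂ (π i) (π j) = graphSq k G₁ i j) :
    ∃ σ : G₁ ≃g G₂, (∀ v, π (Sum.inl v) = Sum.inl (σ v)) ∧
      ∀ e, π (Sum.inr e) = Sum.inr (σ.mapEdgeSet e) := by
  have hleft := isLeft_apply_of_graphSq_apply_equiv k π hπ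
  have hleft_symm : ∀ i, (π.symm i).isLeft = i.isLeft := fun i => by
    simpa using (hleft (π.symm i)).symm
  choose σ hσ using fun v => Sum.isLeft_iff.mp (by simpa using hleft (Sum.inl v))
  choose τ hτ using fun e => Sum.isRight_iff.mp (by simpa using hleft (Sum.inr e))
  have hσ_inj : σ.Injective := fun v w h => Sum.inl_injective (π.injective (by rw [hσ, hσ, h]))
  have hσ_surj : σ.Surjective := fun w => by
    obtain ⟨v, hv⟩ := Sum.isLeft_iff.mp (by simpa using hleft_symm (Sum.inl w))
    exact ⟨v, Sum.inl_injective (by rw [← hσ, ← hv, π.apply_symm_apply])⟩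
  have hτ_surj : τ.Surjective := fun f => by
    obtain ⟨e, he⟩ := Sum.isRight_iff.mp (by simpa using hleft_symm (Sum.inr f))
    exact ⟨e, Sum.inr_injective (by rw [← hτ, ← he, π.apply_symm_apply])⟩
  have hτ_eq : ∀ e, (τ e : Sym2 V₂) = Sym2.map σ e := fun e => by
    ext w
    obtain ⟨v, rfl⟩ := hσ_surj w
    rw [← graphSq_inr_apply_inl_ne_zero_iff k, ← hτ, ← hσ, hπ, graphSq_inr_apply_inl_ne_zero_iff]
    simp [Sym2.mem_map, hσ_inj.eq_iff]
  have hadj : ∀ v w, G₂.Adj (σ v) (σ w) ↔ G₁.Adj v w := fun v w => by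
    rw [← SimpleGraph.mem_edgeSet, ← SimpleGraph.mem_edgeSet, ← Sym2.map_mk]
    constructor
    · intro h
      obtain ⟨e, he⟩ := hτ_surj ⟨_, h⟩
      have he' : (e : Sym2 V₁) = s(v, w) := Sym2.map.injective hσ_inj (by rw [← hτ_eq, he])
      exact he' ▸ e.2
    · intro h
      exact hτ_eq ⟨_, h⟩ ▸ (τ ⟨_, h⟩).2
  refine ⟨⟨Equiv.ofBijective σ ⟨hσ_inj, hσ_surj⟩, hadj _ _⟩, hσ, fun e => ?_⟩
  rw [hτ]
  exact congrArg Sum.inr (Subtype.ext (hτ_eq e))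

end Isomorphism

/-- Every isomorphism of `k`-algebras `ψ : X(G₁) → X(G₂)` between the evolution algebras
of two finite simple graphs is induced by a graph isomorphism `σ : G₁ → G₂`: it carries
vertex basis vectors to vertex basis vectors and edge basis vectors to edge basis vectors
according to `σ`; in particular `ψ = X(σ)`. -/
theorem graphEvolutionAlgebra_iso_induced {V₁ V₂ : Type*} [Fintype V₁] [DecidableEq V₁]
    [Fintype V₂] [DecidableEq V₂]
    (G₁ : SimpleGraph V₁) (G₂ : SimpleGraph V₂)
    [DecidableRel G₁.Adj] [DecidableRel G₂.Adj]
    (ψ : ((V₁ ⊕ ↥G₁.edgeSet) → k) ≃ₗ[k] ((V₂ ⊕ ↥G₂.edgeSet) → k))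
    (hψ : ∀ x y : (V₁ ⊕ ↥G₁.edgeSet) → k,
        ψ (graphMul k G₁ x y) = graphMul k G₂ (ψ x) (ψ y)) :
    ∃ σ : G₁ ≃g G₂,
      (∀ v : V₁, ψ (Pi.single (Sum.inl v) 1) = Pi.single (Sum.inl (σ v)) 1) ∧
      (∀ e : ↥G₁.edgeSet,
        ψ (Pi.single (Sum.inr e) 1) = Pi.single (Sum.inr (σ.mapEdgeSet e)) 1) ∧
      ψ.toLinearMap = graphXmap k G₁ G₂ σ (fun _ _ h => σ.map_rel_iff.mpr h) := by
  obtain ⟨π, hψπ, hπ⟩ := exists_equiv_map_single_of_map_evolutionMul (graphSq_apply_self k G₁)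
    (linearIndependent_graphSq k G₂) (graphSq_apply_self k G₂) ψ
    fun x y => by simpa only [graphMul_apply] using hψ x y
  obtain ⟨σ, hσ_vert, hσ_edge⟩ := exists_iso_of_graphSq_apply_equiv k π hπ
  have hψσ : ∀ i, ψ (Pi.single i 1) =
      Pi.single (graphIdxMap G₁ G₂ σ (fun _ _ h => σ.map_rel_iff.mpr h) i) 1 := by
    rintro (v | e)
    · rw [hψπ, hσ_vert, graphIdxMap]
    · rw [hψπ, hσ_edge]
      rfl
  refine ⟨σ, fun v => hψσ (Sum.inl v), fun e => hψσ (Sum.inr e),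
    (Pi.basisFun k _).ext fun i => ?_⟩
  rw [graphXmap, Module.Basis.constr_basis, Pi.basisFun_apply]
  exact hψσ i
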